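/- The Lie-Yamaguti algebra structure 𝓛₁₅ on ℂ⁴, given by [e₁,e₂]=e₄, [e₁,e₃]=e₄, [e₂,e₃,e₁]=e₄, [e₃,e₁,e₂]=e₄, [e₂,e₃,e₂]=e₄, [e₂,e₁,e₃]=2e₄, degenerates to the structure 𝓛₁₀ with zero binary product and trilinear products [e₂,e₃,e₁]=e₄, [e₃,e₁,e₂]=e₄, [e₂,e₃,e₂]=e₄, [e₂,e₁,e₃]=2e₄. -/

import Mathlib

open Filter Matrix Topology

/-- ℂ⁴ -/
abbrev V4 : Type := Fin 4 → ℂ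

/-- GL₄(ℂ) -/
abbrev GL4 := Matrix.GeneralLinearGroup (Fin 4) ℂ

/-- structure constants of a bilinear map on ℂ⁴: `μ i j` is the value on `(eᵢ, eⱼ)`. -/
abbrev Bil4 := Fin 4 → Fin 4 → V4

/-- structure constants of a trilinear map on ℂ⁴. -/
abbrev Tril4 := Fin 4 → Fin 4 → Fin 4 → V4

/-- standard basis vectors -/
noncomputable def e4 (k : Fin 4) : V4 := Pi.single k (1 : ℂ)

/-- action of `g ∈ GL₄(ℂ)` on a bilinear map: `(g·μ)(x,y) = g μ(g⁻¹x, g⁻¹y)`,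
in structure constants. -/
noncomputable def actBil (g : GL4) (μ : Bil4) : Bil4 := fun i j =>
  (g : Matrix (Fin 4) (Fin 4) ℂ).mulVec
    (∑ p, ∑ q,
      (((g⁻¹ : GL4) : Matrix (Fin 4) (Fin 4) ℂ) p i *
       ((g⁻¹ : GL4) : Matrix (Fin 4) (Fin 4) ℂ) q j) • μ p q)

/-- action of `g ∈ GL₄(ℂ)` on a trilinear map:
`(g·τ)(x,y,z) = g τ(g⁻¹x, g⁻¹y, g⁻¹z)`, in structure constants. -/
noncomputable def actTril (g : GL4) (τ : Tril4) : Tril4 := fun i j k =>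
  (g : Matrix (Fin 4) (Fin 4) ℂ).mulVec
    (∑ p, ∑ q, ∑ r,
      (((g⁻¹ : GL4) : Matrix (Fin 4) (Fin 4) ℂ) p i *
       ((g⁻¹ : GL4) : Matrix (Fin 4) (Fin 4) ℂ) q j *
       ((g⁻¹ : GL4) : Matrix (Fin 4) (Fin 4) ℂ) r k) • τ p q r)

/-- `(μ,τ)` degenerates to `(lam,sig)`: there is a curve `g : ℂ∖{0} → GL₄(ℂ)` with
`g(t)·μ → lam` and `g(t)·τ → sig` as `t → 0`. -/
def Degenerates (μ : Bil4) (τ : Tril4) (lam : Bil4) (sig : Tril4) : Prop :=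
  ∃ g : ℂ → GL4,
    Tendsto (fun t => actBil (g t) μ) (𝓝[≠] (0 : ℂ)) (𝓝 lam) ∧
    Tendsto (fun t => actTril (g t) τ) (𝓝[≠] (0 : ℂ)) (𝓝 sig)

noncomputable def μL15 : Bil4 := fun i j =>
  if i = (0 : Fin 4) ∧ j = (1 : Fin 4) then e4 3
  else if i = (1 : Fin 4) ∧ j = (0 : Fin 4) then -(e4 3)
  else if i = (0 : Fin 4) ∧ j = (2 : Fin 4) then e4 3
  else if i = (2 : Fin 4) ∧ j = (0 : Fin 4) then -(e4 3)
  else 0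

noncomputable def τL15 : Tril4 := fun i j k =>
  if i = (1 : Fin 4) ∧ j = (2 : Fin 4) ∧ k = (0 : Fin 4) then e4 3
  else if i = (2 : Fin 4) ∧ j = (1 : Fin 4) ∧ k = (0 : Fin 4) then -(e4 3)
  else if i = (2 : Fin 4) ∧ j = (0 : Fin 4) ∧ k = (1 : Fin 4) then e4 3
  else if i = (0 : Fin 4) ∧ j = (2 : Fin 4) ∧ k = (1 : Fin 4) then -(e4 3)
  else if i = (1 : Fin 4) ∧ j = (2 : Fin 4) ∧ k = (1 : Fin 4) then e4 3
  else if i = (2 : Fin 4) ∧ j = (1 : Fin 4) ∧ k = (1 : Fin 4) then -(e4 3)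
  else if i = (1 : Fin 4) ∧ j = (0 : Fin 4) ∧ k = (2 : Fin 4) then (2 : ℂ) • e4 3
  else if i = (0 : Fin 4) ∧ j = (1 : Fin 4) ∧ k = (2 : Fin 4) then -((2 : ℂ) • e4 3)
  else 0

noncomputable def zeroBil : Bil4 := fun _ _ => 0

noncomputable def τL10 : Tril4 := fun i j k =>
  if i = (1 : Fin 4) ∧ j = (2 : Fin 4) ∧ k = (0 : Fin 4) then e4 3
  else if i = (2 : Fin 4) ∧ j = (1 : Fin 4) ∧ k = (0 : Fin 4) then -(e4 3)
  else if i = (2 : Fin 4) ∧ j = (0 : Fin 4) ∧ k = (1 : Fin 4) then e4 3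
  else if i = (0 : Fin 4) ∧ j = (2 : Fin 4) ∧ k = (1 : Fin 4) then -(e4 3)
  else if i = (1 : Fin 4) ∧ j = (2 : Fin 4) ∧ k = (1 : Fin 4) then e4 3
  else if i = (2 : Fin 4) ∧ j = (1 : Fin 4) ∧ k = (1 : Fin 4) then -(e4 3)
  else if i = (1 : Fin 4) ∧ j = (0 : Fin 4) ∧ k = (2 : Fin 4) then (2 : ℂ) • e4 3
  else if i = (0 : Fin 4) ∧ j = (1 : Fin 4) ∧ k = (2 : Fin 4) then -((2 : ℂ) • e4 3)
  else 0

/-!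
If the basis vectors carry integer weights and every nonzero structure constant of a product
has output weight equal to the sum of its input weights plus `k`, then the diagonal torus
`diag(t^{w₁}, …, t^{w₄})` rescales that product by `t^k`. For 𝓛₁₅ with weights (1, 1, 1, 3)
the binary product has degree 1 and the ternary one degree 0, so along `t → 0` the binary
product vanishes while the ternary one, whose table is that of 𝓛₁₀, stays fixed.
-/

def weightGL (w : Fin 4 → ℤ) (s : ℂˣ) : GL4 :=
  Units.map (Matrix.diagonalRingHom (Fin 4) ℂ).toMonoidHom
    (MulEquiv.piUnits.symm fun i => s ^ w i)

lemma coe_weightGL (w : Fin 4 → ℤ) (s : ℂˣ) :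
    ((weightGL w s : GL4) : Matrix (Fin 4) (Fin 4) ℂ) = diagonal fun i => (s : ℂ) ^ w i := by
  simp [weightGL]

lemma coe_weightGL_inv (w : Fin 4 → ℤ) (s : ℂˣ) :
    (((weightGL w s)⁻¹ : GL4) : Matrix (Fin 4) (Fin 4) ℂ) =
      diagonal fun i => ((s : ℂ) ^ w i)⁻¹ := by
  simp [weightGL]

def Bil4.IsHomogeneous (μ : Bil4) (w : Fin 4 → ℤ) (k : ℤ) : Prop :=
  ∀ i j l, μ i j l ≠ 0 → w l = w i + w j + k

def Tril4.IsHomogeneous (τ : Tril4) (w : Fin 4 → ℤ) (k : ℤ) : Prop :=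
  ∀ i j m l, τ i j m l ≠ 0 → w l = w i + w j + w m + k

lemma actBil_weightGL {μ : Bil4} {w : Fin 4 → ℤ} {k : ℤ} (hμ : μ.IsHomogeneous w k) (s : ℂˣ) :
    actBil (weightGL w s) μ = (s : ℂ) ^ k • μ := by
  ext i j l
  simp only [actBil, coe_weightGL, coe_weightGL_inv, mulVec_diagonal, diagonal_apply,
    ite_mul, zero_mul, mul_ite, mul_zero, ite_smul, zero_smul, Finset.sum_ite_eq',
    Finset.mem_univ, if_true, Pi.smul_apply, smul_eq_mul]
  by_cases h : μ i j l = 0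
  · simp [h]
  · have hs : (s : ℂ) ≠ 0 := s.ne_zero
    rw [hμ i j l h, zpow_add₀ hs, zpow_add₀ hs]
    field_simp

lemma actTril_weightGL {τ : Tril4} {w : Fin 4 → ℤ} {k : ℤ} (hτ : τ.IsHomogeneous w k) (s : ℂˣ) :
    actTril (weightGL w s) τ = (s : ℂ) ^ k • τ := by
  ext i j m l
  simp only [actTril, coe_weightGL, coe_weightGL_inv, mulVec_diagonal, diagonal_apply,
    ite_mul, zero_mul, mul_ite, mul_zero, ite_smul, zero_smul, Finset.sum_ite_eq',
    Finset.mem_univ, if_true, Pi.smul_apply, smul_eq_mul]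
  by_cases h : τ i j m l = 0
  · simp [h]
  · have hs : (s : ℂ) ≠ 0 := s.ne_zero
    rw [hτ i j m l h, zpow_add₀ hs, zpow_add₀ hs, zpow_add₀ hs]
    field_simp

noncomputable def weightCurve (w : Fin 4 → ℤ) (t : ℂ) : GL4 :=
  if h : t = 0 then 1 else weightGL w (Units.mk0 t h)

lemma weightCurve_of_ne_zero (w : Fin 4 → ℤ) {t : ℂ} (ht : t ≠ 0) :
    weightCurve w t = weightGL w (Units.mk0 t ht) :=
  dif_neg ht

theorem degenerates_of_isHomogeneous {μ : Bil4} {τ : Tril4} {w : Fin 4 → ℤ} {k : ℤ}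
    (hμ : μ.IsHomogeneous w k) (hk : 0 < k) (hτ : τ.IsHomogeneous w 0) :
    Degenerates μ τ zeroBil τ := by
  refine ⟨weightCurve w, ?_, ?_⟩
  · have hlim : Tendsto (fun t : ℂ => t ^ k • μ) (𝓝[≠] 0) (𝓝 zeroBil) := by
      have := ((continuousAt_zpow₀ (0 : ℂ) k (Or.inr hk.le)).tendsto.mono_left
        (nhdsWithin_le_nhds (s := {0}ᶜ))).smul_const μ
      rwa [_root_.zero_zpow k hk.ne', zero_smul] at this
    refine hlim.congr' ?_
    filter_upwards [self_mem_nhdsWithin] with t (ht : t ≠ 0)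
    rw [weightCurve_of_ne_zero w ht, actBil_weightGL hμ, Units.val_mk0]
  · refine tendsto_const_nhds.congr' ?_
    filter_upwards [self_mem_nhdsWithin] with t (ht : t ≠ 0)
    rw [weightCurve_of_ne_zero w ht, actTril_weightGL hτ, zpow_zero, one_smul]

lemma μL15_isHomogeneous : μL15.IsHomogeneous ![1, 1, 1, 3] 1 := by
  intro i j l h
  fin_cases i <;> fin_cases j <;> fin_cases l <;> simp [μL15, e4] at h ⊢

lemma τL15_isHomogeneous : τL15.IsHomogeneous ![1, 1, 1, 3] 0 := by
  intro i j m l h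
  fin_cases i <;> fin_cases j <;> fin_cases m <;> fin_cases l <;> simp [τL15, e4] at h ⊢

/-- 𝓛₁₅ degenerates to 𝓛₁₀. -/
theorem stmt2 : Degenerates μL15 τL15 zeroBil τL10 := by
  have hτ : τL10 = τL15 := rfl
  rw [hτ]
  exact degenerates_of_isHomogeneous μL15_isHomogeneous one_pos τL15_isHomogeneous
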